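/- Let W ∈ ℝ^{n×q} have full row rank (rank(W) = n < q) and T ∈ ℝ^{n×m} have full column rank (rank(T) = m < n). Assume the Gauss–Markov model: y = Xβ + ε with X = [W, T] fixed, β ∈ ℝᵖ deterministic, and ε a random vector with E[ε] = 0 and E[ε εᵀ] = σ² I_n. Let β̂_{Wᶜ} := (W† T)† W† y be the partially regularized unpenalized-block estimate, assume tr(P⊥_{W†T} G_W) > 0, and define σ̂²_{Wᶜ} := ‖W† y − W† T β̂_{Wᶜ}‖₂² / tr(P⊥_{W†T} G_W). Then E[σ̂²_{Wᶜ}] = σ² + ‖P⊥_{W†T} W† E[y]‖₂² / tr(P⊥_{W†T} G_W), where E[y] = Xβ. -/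

import Mathlib

/-!
The residual is `W† y − W†T β̂ = P W† y` with `P = I − (W†T)(W†T)†` the orthogonal projector
onto the orthogonal complement of the column space of `W†T`. For a fixed matrix `A` and noise
`ε` with mean `0` and covariance `σ² I`, `E‖A (c + ε)‖² = ‖A c‖² + σ² tr(A Aᵀ)`, since the cross
term has mean zero. With `A = P W†`, symmetry and idempotence of `P` give
`tr(A Aᵀ) = tr(P W† W†ᵀ)`, and `W† W†ᵀ = (Wᵀ W)†` by uniqueness of the pseudoinverse.
-/

open Matrix BigOperators MeasureTheory

noncomputable section

/-- `B` is the Moore–Penrose pseudoinverse of `A`. -/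
def IsMPInv {m n : Type*} [Fintype m] [Fintype n]
    (A : Matrix m n ℝ) (B : Matrix n m ℝ) : Prop :=
  A * B * A = A ∧ B * A * B = B ∧ (A * B)ᵀ = A * B ∧ (B * A)ᵀ = B * A

namespace IsMPInv

variable {m n : Type*} [Fintype m] [Fintype n]

theorem unique {A : Matrix m n ℝ} {B C : Matrix n m ℝ}
    (hB : IsMPInv A B) (hC : IsMPInv A C) : B = C := by
  obtain ⟨hB1, hB2, hB3, hB4⟩ := hB
  obtain ⟨hC1, hC2, hC3, hC4⟩ := hC
  have hAB : A * B = A * C :=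
    calc A * B = (A * C * (A * B))ᵀ := by rw [← Matrix.mul_assoc, hC1, hB3]
      _ = A * B * (A * C) := by rw [transpose_mul, hB3, hC3]
      _ = A * C := by rw [← Matrix.mul_assoc, hB1]
  have hBA : B * A = C * A :=
    calc B * A = (B * A * (C * A))ᵀ := by rw [Matrix.mul_assoc, ← Matrix.mul_assoc A, hC1, hB4]
      _ = C * A * (B * A) := by rw [transpose_mul, hB4, hC4]
      _ = C * A := by rw [Matrix.mul_assoc, ← Matrix.mul_assoc A, hB1]
  calc B = B * A * B := hB2.symm
    _ = C * A * C := by rw [hBA, Matrix.mul_assoc, hAB, ← Matrix.mul_assoc]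
    _ = C := hC2

theorem transpose_mul_self {A : Matrix m n ℝ} {B : Matrix n m ℝ} (h : IsMPInv A B) :
    IsMPInv (Aᵀ * A) (B * Bᵀ) := by
  obtain ⟨h1, h2, h3, h4⟩ := h
  have hBA : Bᵀ * Aᵀ = A * B := by rw [← transpose_mul, h3]
  have hleft : Aᵀ * A * (B * Bᵀ) = B * A :=
    calc Aᵀ * A * (B * Bᵀ) = (B * A * B * A)ᵀ := by
          simp only [transpose_mul, Matrix.mul_assoc]
          rw [← Matrix.mul_assoc Bᵀ, hBA, Matrix.mul_assoc]
      _ = B * A := by rw [h2, h4]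
  have hright : B * Bᵀ * (Aᵀ * A) = B * A :=
    calc B * Bᵀ * (Aᵀ * A) = B * (A * B) * A := by
          simp only [Matrix.mul_assoc, ← Matrix.mul_assoc Bᵀ, hBA]
      _ = B * A := by rw [← Matrix.mul_assoc, h2]
  refine ⟨?_, ?_, by rw [hleft, h4], by rw [hright, h4]⟩
  · rw [hleft, ← h4, transpose_mul, Matrix.mul_assoc, ← Matrix.mul_assoc Bᵀ, hBA, h1]
  · rw [hright, ← Matrix.mul_assoc, h2]

theorem isIdempotentElem_mul {A : Matrix m n ℝ} {B : Matrix n m ℝ} (h : IsMPInv A B) :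
    IsIdempotentElem (A * B) := by
  rw [IsIdempotentElem, ← Matrix.mul_assoc, h.1]

end IsMPInv

theorem trace_mul_mul_transpose_of_isIdempotentElem {m n : Type*} [Fintype m] [Fintype n]
    {P : Matrix m m ℝ} (hP : IsIdempotentElem P) (hPt : Pᵀ = P)
    (M : Matrix m n ℝ) : (P * M * (P * M)ᵀ).trace = (P * (M * Mᵀ)).trace := by
  rw [transpose_mul, hPt, ← Matrix.mul_assoc, trace_mul_comm, ← Matrix.mul_assoc,
    ← Matrix.mul_assoc, hP.eq, Matrix.mul_assoc]

theorem trace_mul_transpose_eq_sum_dotProduct {m n : Type*} [Fintype m] [Fintype n]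
    (A : Matrix m n ℝ) : (A * Aᵀ).trace = ∑ j, A j ⬝ᵥ A j :=
  rfl

section WhiteNoise

variable {Ω ι : Type*} [MeasurableSpace Ω] {μ : Measure Ω} [Fintype ι] {ε : Ω → ι → ℝ}

theorem integrable_dotProduct (hint : ∀ i, Integrable (fun ω => ε ω i) μ) (v : ι → ℝ) :
    Integrable (fun ω => v ⬝ᵥ ε ω) μ :=
  integrable_finsetSum _ fun i _ => (hint i).const_mul (v i)

theorem integral_dotProduct_eq_zero (hint : ∀ i, Integrable (fun ω => ε ω i) μ)
    (hmean : ∀ i, ∫ ω, ε ω i ∂μ = 0) (v : ι → ℝ) : ∫ ω, v ⬝ᵥ ε ω ∂μ = 0 := by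
  simp only [dotProduct]
  rw [integral_finsetSum _ fun i _ => (hint i).const_mul (v i)]
  simp [integral_const_mul, hmean]

theorem dotProduct_sq (v x : ι → ℝ) : (v ⬝ᵥ x) ^ 2 = ∑ i, ∑ j, v i * v j * (x i * x j) := by
  rw [sq, dotProduct, Finset.sum_mul_sum]
  exact Finset.sum_congr rfl fun i _ => Finset.sum_congr rfl fun j _ => by ring

theorem integrable_dotProduct_sq (hint2 : ∀ i j, Integrable (fun ω => ε ω i * ε ω j) μ)
    (v : ι → ℝ) : Integrable (fun ω => (v ⬝ᵥ ε ω) ^ 2) μ := by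
  simp only [dotProduct_sq]
  exact integrable_finsetSum _ fun i _ =>
    integrable_finsetSum _ fun j _ => (hint2 i j).const_mul _

theorem integral_dotProduct_sq [DecidableEq ι] {σ2 : ℝ}
    (hint2 : ∀ i j, Integrable (fun ω => ε ω i * ε ω j) μ)
    (hcov : ∀ i j, ∫ ω, ε ω i * ε ω j ∂μ = if i = j then σ2 else 0) (v : ι → ℝ) :
    ∫ ω, (v ⬝ᵥ ε ω) ^ 2 ∂μ = σ2 * (v ⬝ᵥ v) := by
  simp only [dotProduct_sq]
  rw [integral_finsetSum _ fun i _ => integrable_finsetSum _ fun j _ => (hint2 i j).const_mul _]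
  simp_rw [integral_finsetSum _ fun j _ => (hint2 _ j).const_mul _, integral_const_mul, hcov,
    mul_ite, mul_zero, Finset.sum_ite_eq, Finset.mem_univ, if_true, dotProduct, Finset.mul_sum]
  exact Finset.sum_congr rfl fun i _ => by ring

theorem integrable_add_dotProduct_sq [IsFiniteMeasure μ]
    (hint : ∀ i, Integrable (fun ω => ε ω i) μ)
    (hint2 : ∀ i j, Integrable (fun ω => ε ω i * ε ω j) μ) (b : ℝ) (v : ι → ℝ) :
    Integrable (fun ω => (b + v ⬝ᵥ ε ω) ^ 2) μ := by
  simp_rw [add_sq]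
  exact ((integrable_const _).fun_add ((integrable_dotProduct hint v).const_mul _)).fun_add
    (integrable_dotProduct_sq hint2 v)

theorem integral_add_dotProduct_sq [IsProbabilityMeasure μ] [DecidableEq ι] {σ2 : ℝ}
    (hint : ∀ i, Integrable (fun ω => ε ω i) μ)
    (hint2 : ∀ i j, Integrable (fun ω => ε ω i * ε ω j) μ)
    (hmean : ∀ i, ∫ ω, ε ω i ∂μ = 0)
    (hcov : ∀ i j, ∫ ω, ε ω i * ε ω j ∂μ = if i = j then σ2 else 0) (b : ℝ) (v : ι → ℝ) :
    ∫ ω, (b + v ⬝ᵥ ε ω) ^ 2 ∂μ = b ^ 2 + σ2 * (v ⬝ᵥ v) := by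
  have hlin := (integrable_dotProduct hint v).const_mul (2 * b)
  simp_rw [add_sq]
  rw [integral_add ((integrable_const _).fun_add hlin) (integrable_dotProduct_sq hint2 v),
    integral_add (integrable_const _) hlin, integral_const_mul,
    integral_dotProduct_eq_zero hint hmean, integral_dotProduct_sq hint2 hcov]
  simp

theorem integral_sum_sq_mulVec_add {κ : Type*} [Fintype κ] [IsProbabilityMeasure μ]
    [DecidableEq ι] {σ2 : ℝ}
    (hint : ∀ i, Integrable (fun ω => ε ω i) μ)
    (hint2 : ∀ i j, Integrable (fun ω => ε ω i * ε ω j) μ)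
    (hmean : ∀ i, ∫ ω, ε ω i ∂μ = 0)
    (hcov : ∀ i j, ∫ ω, ε ω i * ε ω j ∂μ = if i = j then σ2 else 0)
    (A : Matrix κ ι ℝ) (c : ι → ℝ) :
    ∫ ω, ∑ k, ((A *ᵥ (c + ε ω)) k) ^ 2 ∂μ
      = ∑ k, ((A *ᵥ c) k) ^ 2 + σ2 * (A * Aᵀ).trace := by
  have hrow : ∀ ω k, (A *ᵥ (c + ε ω)) k = (A *ᵥ c) k + A k ⬝ᵥ ε ω := fun ω k => by
    rw [mulVec_add]; rfl
  simp_rw [hrow]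
  rw [integral_finsetSum _ fun k _ => ?_]
  · simp_rw [integral_add_dotProduct_sq hint hint2 hmean hcov]
    rw [Finset.sum_add_distrib, ← Finset.mul_sum, trace_mul_transpose_eq_sum_dotProduct]
  · exact integrable_add_dotProduct_sq hint hint2 _ _

end WhiteNoise

theorem variance_estimator_unpenalized_block_general
    {n q m : ℕ} {Ω : Type*} [MeasurableSpace Ω]
    (μ : Measure Ω) [IsProbabilityMeasure μ]
    (W : Matrix (Fin n) (Fin q) ℝ) (T : Matrix (Fin n) (Fin m) ℝ)
    -- Gauss–Markov model: y = Xβ + ε with X = [W, T] fixed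
    (β : Fin q ⊕ Fin m → ℝ) (σ2 : ℝ)
    (ε : Ω → Fin n → ℝ)
    (hint1 : ∀ i, Integrable (fun ω => ε ω i) μ)
    (hint2 : ∀ i j, Integrable (fun ω => ε ω i * ε ω j) μ)
    (hmean : ∀ i, ∫ ω, ε ω i ∂μ = 0)
    (hcov : ∀ i j, ∫ ω, ε ω i * ε ω j ∂μ = if i = j then σ2 else 0)
    (y : Ω → Fin n → ℝ)
    (hy : ∀ ω, y ω = (Matrix.fromCols W T) *ᵥ β + ε ω)
    -- pseudoinverses `Wp = W†` and `K = (W† T)†` (so `P⊥_{W†T} = I_q − (W†T)(W†T)†`),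
    -- and the inverse Gram matrix `GWq = (Wᵀ W)† = W† (W†)ᵀ` appearing in the trace
    (Wp : Matrix (Fin q) (Fin n) ℝ) (hWp : IsMPInv W Wp)
    (K : Matrix (Fin m) (Fin q) ℝ) (hK : IsMPInv (Wp * T) K)
    (GWq : Matrix (Fin q) (Fin q) ℝ) (hGWq : IsMPInv (Wᵀ * W) GWq)
    -- the normalization tr(P⊥_{W†T} G_W)
    (tr : ℝ)
    (htr : tr = ((((1 : Matrix (Fin q) (Fin q) ℝ) - (Wp * T) * K) * GWq)).trace)
    (htrpos : 0 < tr)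
    -- β̂_{Wᶜ} = (W† T)† W† y
    (βWc : Ω → Fin m → ℝ) (hβWc : ∀ ω, βWc ω = K *ᵥ (Wp *ᵥ y ω)) :
    -- E[σ̂²_{Wᶜ}] = σ² + ‖P⊥_{W†T} W† E[y]‖₂² / tr(P⊥_{W†T} G_W), with
    -- σ̂²_{Wᶜ} = ‖W† y − W† T β̂_{Wᶜ}‖₂² / tr(P⊥_{W†T} G_W) and E[y] = Xβ
    ∫ ω, (∑ j, ((Wp *ᵥ y ω) j - ((Wp * T) *ᵥ βWc ω) j) ^ 2) / tr ∂μ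
      = σ2 + (∑ j, ((((1 : Matrix (Fin q) (Fin q) ℝ) - (Wp * T) * K)
          *ᵥ (Wp *ᵥ ((Matrix.fromCols W T) *ᵥ β))) j) ^ 2) / tr := by
  set P : Matrix (Fin q) (Fin q) ℝ := 1 - (Wp * T) * K with hP
  have hresidual : ∀ ω, Wp *ᵥ y ω - (Wp * T) *ᵥ βWc ω
      = (P * Wp) *ᵥ ((Matrix.fromCols W T) *ᵥ β + ε ω) := fun ω => by
    rw [hβWc, ← hy, mulVec_mulVec, mulVec_mulVec, hP, Matrix.sub_mul, Matrix.one_mul,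
      sub_mulVec, Matrix.mul_assoc]
  have htrace : (P * Wp * (P * Wp)ᵀ).trace = tr := by
    have hPt : Pᵀ = P := by rw [hP, transpose_sub, transpose_one, hK.2.2.1]
    rw [htr, hGWq.unique hWp.transpose_mul_self,
      trace_mul_mul_transpose_of_isIdempotentElem hK.isIdempotentElem_mul.one_sub hPt]
  calc ∫ ω, (∑ j, ((Wp *ᵥ y ω) j - ((Wp * T) *ᵥ βWc ω) j) ^ 2) / tr ∂μ
      = (∫ ω, ∑ j, (((P * Wp) *ᵥ ((Matrix.fromCols W T) *ᵥ β + ε ω)) j) ^ 2 ∂μ) / tr := by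
        simp_rw [integral_div, ← Pi.sub_apply, hresidual]
    _ = _ := by
        rw [integral_sum_sq_mulVec_add hint1 hint2 hmean hcov, htrace,
          ← mulVec_mulVec]
        field_simp
        ring

theorem variance_estimator_unpenalized_block
    {n q m : ℕ} {Ω : Type*} [MeasurableSpace Ω]
    (μ : Measure Ω) [IsProbabilityMeasure μ]
    (W : Matrix (Fin n) (Fin q) ℝ) (T : Matrix (Fin n) (Fin m) ℝ)
    (hW : W.rank = n) (hnq : n < q)
    (hT : T.rank = m) (hmn : m < n)
    -- Gauss–Markov model: y = Xβ + ε with X = [W, T] fixed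
    (β : Fin q ⊕ Fin m → ℝ) (σ2 : ℝ) (hσ2 : 0 ≤ σ2)
    (ε : Ω → Fin n → ℝ)
    (hint1 : ∀ i, Integrable (fun ω => ε ω i) μ)
    (hint2 : ∀ i j, Integrable (fun ω => ε ω i * ε ω j) μ)
    (hmean : ∀ i, ∫ ω, ε ω i ∂μ = 0)
    (hcov : ∀ i j, ∫ ω, ε ω i * ε ω j ∂μ = if i = j then σ2 else 0)
    (y : Ω → Fin n → ℝ)
    (hy : ∀ ω, y ω = (Matrix.fromCols W T) *ᵥ β + ε ω)
    -- pseudoinverses `Wp = W†` and `K = (W† T)†` (so `P⊥_{W†T} = I_q − (W†T)(W†T)†`),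
    -- and the inverse Gram matrix `GWq = (Wᵀ W)† = W† (W†)ᵀ` appearing in the trace
    (Wp : Matrix (Fin q) (Fin n) ℝ) (hWp : IsMPInv W Wp)
    (K : Matrix (Fin m) (Fin q) ℝ) (hK : IsMPInv (Wp * T) K)
    (GWq : Matrix (Fin q) (Fin q) ℝ) (hGWq : IsMPInv (Wᵀ * W) GWq)
    -- the normalization tr(P⊥_{W†T} G_W)
    (tr : ℝ)
    (htr : tr = ((((1 : Matrix (Fin q) (Fin q) ℝ) - (Wp * T) * K) * GWq)).trace)
    (htrpos : 0 < tr)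
    -- β̂_{Wᶜ} = (W† T)† W† y
    (βWc : Ω → Fin m → ℝ) (hβWc : ∀ ω, βWc ω = K *ᵥ (Wp *ᵥ y ω)) :
    -- E[σ̂²_{Wᶜ}] = σ² + ‖P⊥_{W†T} W† E[y]‖₂² / tr(P⊥_{W†T} G_W), with
    -- σ̂²_{Wᶜ} = ‖W† y − W† T β̂_{Wᶜ}‖₂² / tr(P⊥_{W†T} G_W) and E[y] = Xβ
    ∫ ω, (∑ j, ((Wp *ᵥ y ω) j - ((Wp * T) *ᵥ βWc ω) j) ^ 2) / tr ∂μ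
      = σ2 + (∑ j, ((((1 : Matrix (Fin q) (Fin q) ℝ) - (Wp * T) * K)
          *ᵥ (Wp *ᵥ ((Matrix.fromCols W T) *ᵥ β))) j) ^ 2) / tr :=
  variance_estimator_unpenalized_block_general μ W T β σ2 ε hint1 hint2 hmean hcov y hy Wp hWp K hK
    GWq hGWq tr htr htrpos βWc hβWc
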